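/- arXiv:2012.00120 — 4 statements merged into one kernel-verified Lean document; each statement's English description precedes it below -/
import Mathlib

section
/- Let a be an assignment of the sheaf M whose restriction to N is a global section of N, say with value s_w ∈ S_w at each vertex element w and value (c_v, s|_{U_v}) ∈ F_v at each neighborhood element U_v, and whose remaining values are a_{r_v} = J_v(s_v), a_{r_{U_v}} = J'_v(c_v, s|_{U_v}), and 0 at every z element. Then the consistency radius of a equals the global objective: c_M(a) = sqrt( Σ_{v∈V} ( |J_v(s_v)|² + |J'_v(c_v, s|_{U_v})|² ) ). Consequently, among such assignments, minimizing the consistency radius of M is precisely the problem of minimizing the global objective function. -/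
open scoped Classical

/-!  The sheaf `M` extends the network sheaf `N` (on vertex elements `v` with stalk
`S v` and neighborhood elements `U_v` with stalk `F v`) by objective elements
`r_v, r_{U_v}` with stalk `ℝ` and trivial elements `z_v, z_{U_v}` with stalk `{0}`.
The nontrivial relations and restrictions are:
`U_v ≤ w` (`w ∈ U_v`, restriction `pr_{S_w}`), `v ≤ r_v` (restriction `J_v`),
`U_v ≤ r_{U_v}` (restriction `J'_v`), the composites `U_v ≤ r_w` for `w ∈ U_v`
(restriction `J_w ∘ pr_{S_w}`), and `z_v ≤ r_v`, `z_{U_v} ≤ r_{U_v}` (zero maps).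
An assignment is recorded by its components on the nontrivial stalks (the `z`
stalks carry the unique value `0`).  Reflexive pairs `x ≤ x` contribute `0` to
the consistency radius and are omitted from the sum. -/

universe u
variable {V : Type u}

/-- `R_v = C_v × Π_{w ∈ U_v} S_w`, where `U_v = {w : E w v}`. -/
def Rv (E : V → V → Prop) (S : V → Type u) (C : V → Type u) (v : V) : Type u :=
  C v × ((w : {w // E w v}) → S w.1)

/-- An assignment of the sheaf `M`, recorded componentwise. -/
structure MAssignment (E : V → V → Prop) (S : V → Type u) (C : V → Type u)
    (F : ∀ v, Set (Rv E S C v)) where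
  /-- value on the vertex element `w` (stalk `S w`) -/
  vert : ∀ w, S w
  /-- value on the neighborhood element `U_v` (stalk `F v`) -/
  nbhd : ∀ v, {r : Rv E S C v // r ∈ F v}
  /-- value on the objective element `r_v` (stalk `ℝ`) -/
  rv : V → ℝ
  /-- value on the objective element `r_{U_v}` (stalk `ℝ`) -/
  rU : V → ℝ

/-- The consistency radius of an assignment of `M`: the square root of the sum, over
all nontrivial relations of the poset of `M`, of the squared distance between the
value at the target and the image of the value at the source under the restriction. -/
noncomputable def cM [Fintype V] (E : V → V → Prop) (S : V → Type u)
    [∀ v, PseudoMetricSpace (S v)] (C : V → Type u) (F : ∀ v, Set (Rv E S C v))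
    (J : ∀ v, S v → ℝ) (J' : ∀ v, Rv E S C v → ℝ)
    (a : MAssignment E S C F) : ℝ :=
  Real.sqrt (∑ v : V,
    ((∑ w : {w // E w v}, (dist (a.vert w.1) ((a.nbhd v).1.2 w)) ^ 2)
      + (∑ w : {w // E w v}, (dist (a.rv w.1) (J w.1 ((a.nbhd v).1.2 w))) ^ 2)
      + (dist (a.rv v) (J v (a.vert v))) ^ 2
      + (dist (a.rU v) (J' v (a.nbhd v).1)) ^ 2
      + (dist (a.rv v) 0) ^ 2
      + (dist (a.rU v) 0) ^ 2))

/-- If the restriction of an assignment `a` of `M` to `N` is a global section of `N`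
and its values on the objective elements are `a_{r_v} = J_v(s_v)` and
`a_{r_{U_v}} = J'_v(c_v, s|_{U_v})`, then the consistency radius of `a` equals the
global objective `sqrt(Σ_v (|J_v(s_v)|² + |J'_v(c_v, s|_{U_v})|²))`. -/
theorem consistencyRadius_eq_globalObjective
    [Fintype V] (E : V → V → Prop) (hE : ∀ v, E v v)
    (S : V → Type u) [∀ v, PseudoMetricSpace (S v)] (C : V → Type u)
    (F : ∀ v, Set (Rv E S C v))
    (J : ∀ v, S v → ℝ) (J' : ∀ v, Rv E S C v → ℝ)
    (a : MAssignment E S C F)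
    (hsec : ∀ (v w : V) (h : E w v), a.vert w = (a.nbhd v).1.2 ⟨w, h⟩)
    (hrv : ∀ v, a.rv v = J v (a.vert v))
    (hrU : ∀ v, a.rU v = J' v (a.nbhd v).1) :
    cM E S C F J J' a
      = Real.sqrt (∑ v : V, (|J v (a.vert v)| ^ 2 + |J' v (a.nbhd v).1| ^ 2)) := by
  unfold cM
  congr 1
  apply Finset.sum_congr rfl
  intro v _
  have h1 : ∀ w : {w // E w v}, dist (a.vert w.1) ((a.nbhd v).1.2 w) = 0 := by
    intro w; rw [hsec v w.1 w.2]; simp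
  have h2 : ∀ w : {w // E w v}, dist (a.rv w.1) (J w.1 ((a.nbhd v).1.2 w)) = 0 := by
    intro w; rw [hrv w.1, hsec v w.1 w.2]; simp
  rw [Finset.sum_eq_zero (fun w _ => by rw [h1 w]; ring),
      Finset.sum_eq_zero (fun w _ => by rw [h2 w]; ring)]
  simp [hrv, hrU, Real.dist_eq, sq_abs]
end

section
/- The global sections of the trajectory sheaf 𝒯 are precisely the feasible trajectories of the network given control actions at each time step. Precisely: the map sending each family {(cⁿ, sⁿ)}_{n=0}^{T}, with cⁿ ∈ Π_v C_v and sⁿ ∈ Π_v S_v satisfying (cⁿ_v, sⁿ|_{U_v}) ∈ F_v for all n and v, and sⁿ⁺¹_v = f_v(cⁿ_v, sⁿ|_{U_v}) for all n < T and all v, to the assignment of 𝒯 with value sⁿ_w at w_n, value (cⁿ_v, sⁿ|_{U_v}) at u_{v,n}, and value sⁿ_v at ℓ_{v,n}, is a bijection onto the set of global sections of 𝒯. -/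
/-!  The trajectory sheaf `𝒯` over a horizon `T ≥ 1`.  For each time `n ∈ {0,…,T}`
it has vertex elements `w_n` (stalk `S w`), neighborhood elements `u_{v,n}`
(stalk `F v`), and link elements `ℓ_{v,n}` (stalk `S v`), with relations
`u_{v,n} ≤ w_n` for `w ∈ U_v` (restriction `pr_{S_w}`), `u_{v,n} ≤ ℓ_{v,n}`
(restriction `pr_{S_v}`), and `u_{v,n} ≤ ℓ_{v,n+1}` for `n < T` (restriction `f_v`).
Assignments are recorded componentwise. -/

universe u
variable {V : Type u}

/-- An assignment of the trajectory sheaf `𝒯`, recorded componentwise. -/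
structure TAssignment (T : ℕ) (E : V → V → Prop) (S : V → Type u) (C : V → Type u)
    (F : ∀ v, Set (Rv E S C v)) where
  /-- value on the vertex element `w_n` (stalk `S w`) -/
  vert : Fin (T + 1) → ∀ w, S w
  /-- value on the neighborhood element `u_{v,n}` (stalk `F v`) -/
  nbhd : Fin (T + 1) → ∀ v, {r : Rv E S C v // r ∈ F v}
  /-- value on the link element `ℓ_{v,n}` (stalk `S v`) -/
  link : Fin (T + 1) → ∀ v, S v

/-- Feasible trajectories: families `{(cⁿ, sⁿ)}` with `(cⁿ_v, sⁿ|_{U_v}) ∈ F_v`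
for all `n` and `v`, and `sⁿ⁺¹_v = f_v(cⁿ_v, sⁿ|_{U_v})` for all `n < T` and `v`. -/
def Traj (T : ℕ) (E : V → V → Prop) (S : V → Type u) (C : V → Type u)
    (F : ∀ v, Set (Rv E S C v)) (f : ∀ v, Rv E S C v → S v) : Type u :=
  {t : Fin (T + 1) → (((v : V) → C v) × ((v : V) → S v)) //
    (∀ n v, (⟨(t n).1 v, fun w => (t n).2 w.1⟩ : Rv E S C v) ∈ F v) ∧
      ∀ (n : Fin T) (v : V),
        (t n.succ).2 v = f v ⟨(t n.castSucc).1 v, fun w => (t n.castSucc).2 w.1⟩}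

/-- The map sending a feasible trajectory to the corresponding assignment of `𝒯`. -/
def ThetaT (T : ℕ) (E : V → V → Prop) (S : V → Type u) (C : V → Type u)
    (F : ∀ v, Set (Rv E S C v)) (f : ∀ v, Rv E S C v → S v)
    (t : Traj T E S C F f) : TAssignment T E S C F where
  vert := fun n w => (t.1 n).2 w
  nbhd := fun n v => ⟨⟨(t.1 n).1 v, fun w => (t.1 n).2 w.1⟩, t.2.1 n v⟩
  link := fun n v => (t.1 n).2 v

/-- Global sections of `𝒯`: assignments compatible with all restrictions. -/
def IsSectionT (T : ℕ) (E : V → V → Prop) (hE : ∀ v, E v v)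
    (S : V → Type u) (C : V → Type u)
    (F : ∀ v, Set (Rv E S C v)) (f : ∀ v, Rv E S C v → S v)
    (a : TAssignment T E S C F) : Prop :=
  (∀ (n : Fin (T + 1)) (v w : V) (h : E w v), a.vert n w = (a.nbhd n v).1.2 ⟨w, h⟩) ∧
    (∀ (n : Fin (T + 1)) (v : V), a.link n v = (a.nbhd n v).1.2 ⟨v, hE v⟩) ∧
    ∀ (n : Fin T) (v : V), a.link n.succ v = f v (a.nbhd n.castSucc v).1

/-- The global sections of the trajectory sheaf `𝒯` are precisely the feasible
trajectories of the network given control actions at each time step:  the map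
`ThetaT` is a bijection from feasible trajectories onto global sections of `𝒯`. -/
theorem thetaT_bijective_onto_sections
    [Fintype V] (T : ℕ) (hT : 1 ≤ T) (E : V → V → Prop) (hE : ∀ v, E v v)
    (S : V → Type u) (C : V → Type u)
    (F : ∀ v, Set (Rv E S C v)) (f : ∀ v, Rv E S C v → S v) :
    Function.Injective (ThetaT T E S C F f) ∧
      Set.range (ThetaT T E S C F f) = {a | IsSectionT T E hE S C F f a} := by
  constructor
  · intro t₁ t₂ h
    apply Subtype.ext
    funext n
    have hv : ∀ w, (t₁.1 n).2 w = (t₂.1 n).2 w := fun w =>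
      congrFun (congrFun (congrArg TAssignment.vert h) n) w
    have hc : ∀ v, (t₁.1 n).1 v = (t₂.1 n).1 v := fun v =>
      congrArg (fun r => r.1.1) (congrFun (congrFun (congrArg TAssignment.nbhd h) n) v)
    exact Prod.ext_iff.mpr ⟨funext hc, funext hv⟩
  · ext a
    constructor
    · rintro ⟨t, rfl⟩
      refine ⟨fun n v w h => rfl, fun n v => rfl, fun n v => t.2.2 n v⟩
    · rintro ⟨h1, h2, h3⟩
      have key : ∀ (n : Fin (T+1)) (v : V),
          (⟨(a.nbhd n v).1.1, fun w => a.vert n w.1⟩ : Rv E S C v) = (a.nbhd n v).1 := by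
        intro n v
        exact Prod.ext_iff.mpr ⟨rfl, funext fun w => h1 n v w.1 w.2⟩
      refine ⟨⟨fun n => ⟨fun v => (a.nbhd n v).1.1, fun v => a.vert n v⟩,
        fun n v => key n v ▸ (a.nbhd n v).2,
        fun n v => ?_⟩, ?_⟩
      · show a.vert n.succ v = f v ⟨(a.nbhd n.castSucc v).1.1, fun w => a.vert n.castSucc w.1⟩
        rw [key n.castSucc v, ← h3 n v, h2 n.succ v, ← h1 n.succ v v (hE v)]
      · obtain ⟨av, an, al⟩ := a
        simp only [ThetaT, TAssignment.mk.injEq]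
        refine ⟨trivial, funext fun n => funext fun v => Subtype.ext (key n v), ?_⟩
        funext n v
        exact ((h2 n v).trans (h1 n v v (hE v)).symm).symm
end

section
/- Let a be an assignment of the sheaf 𝒮 whose restriction to the trajectory sheaf 𝒯 is a global section corresponding to the trajectory {(cⁿ, sⁿ)}_{n=0}^{T}, and whose remaining values are a_{r_{v,n}} = J_v(sⁿ_v), a_{r_{u_v,n}} = J'_v(cⁿ_v, sⁿ|_{U_v}), and 0 at every z element. Then c_𝒮(a) = sqrt( Σ_{n=0}^{T} Σ_{v∈V} ( |J_v(sⁿ_v)|² + |J'_v(cⁿ_v, sⁿ|_{U_v})|² ) ). Consequently, minimizing consistency radius over such assignments is precisely the finite-horizon optimal network control problem. -/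
open scoped Classical

/-!  The sheaf `𝒮` extends the trajectory sheaf `𝒯` (horizon `T ≥ 1`; for each time
`n ∈ {0,…,T}`: vertex elements `w_n` with stalk `S w`, neighborhood elements
`u_{v,n}` with stalk `F v`, link elements `ℓ_{v,n}` with stalk `S v`; relations
`u_{v,n} ≤ w_n` for `w ∈ U_v` with restriction `pr_{S_w}`, `u_{v,n} ≤ ℓ_{v,n}` with
restriction `pr_{S_v}`, `u_{v,n} ≤ ℓ_{v,n+1}` for `n < T` with restriction `f_v`)
by objective elements `r_{v,n}, r_{u_v,n}` (stalk `ℝ`) and trivial elements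
`z_{v,n}, z_{u_v,n}` (stalk `{0}`), with restrictions `J_v` along `v_n ≤ r_{v,n}`,
`J'_v` along `u_{v,n} ≤ r_{u_v,n}`, `J_w ∘ pr_{S_w}` along the composites
`u_{v,n} ≤ r_{w,n}` for `w ∈ U_v`, and zero maps out of the `z` elements.
Assignments are recorded componentwise (the `z` stalks carry the unique value `0`);
reflexive relations contribute `0` to the consistency radius and are omitted. -/

universe u
variable {V : Type u}

/-- An assignment of the sheaf `𝒮`, recorded componentwise. -/
structure SAssignment (T : ℕ) (E : V → V → Prop) (S : V → Type u) (C : V → Type u)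
    (F : ∀ v, Set (Rv E S C v)) where
  vert : Fin (T + 1) → ∀ w, S w
  nbhd : Fin (T + 1) → ∀ v, {r : Rv E S C v // r ∈ F v}
  link : Fin (T + 1) → ∀ v, S v
  /-- value on the objective element `r_{v,n}` (stalk `ℝ`) -/
  rV : Fin (T + 1) → V → ℝ
  /-- value on the objective element `r_{u_v,n}` (stalk `ℝ`) -/
  rU : Fin (T + 1) → V → ℝ

/-- The consistency radius of an assignment of `𝒮`: the square root of the sum, over
all nontrivial relations of the poset of `𝒮`, of the squared distance between the
value at the target and the image of the value at the source under the restriction. -/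
noncomputable def cS [Fintype V] (T : ℕ) (E : V → V → Prop) (hE : ∀ v, E v v)
    (S : V → Type u) [∀ v, PseudoMetricSpace (S v)] (C : V → Type u)
    (F : ∀ v, Set (Rv E S C v)) (f : ∀ v, Rv E S C v → S v)
    (J : ∀ v, S v → ℝ) (J' : ∀ v, Rv E S C v → ℝ)
    (a : SAssignment T E S C F) : ℝ :=
  Real.sqrt (∑ n : Fin (T + 1), ∑ v : V,
    ((∑ w : {w // E w v}, (dist (a.vert n w.1) ((a.nbhd n v).1.2 w)) ^ 2)
      + (dist (a.link n v) ((a.nbhd n v).1.2 ⟨v, hE v⟩)) ^ 2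
      + (if h : (n : ℕ) + 1 ≤ T then
          (dist (a.link ⟨(n : ℕ) + 1, by omega⟩ v) (f v (a.nbhd n v).1)) ^ 2
        else 0)
      + (∑ w : {w // E w v}, (dist (a.rV n w.1) (J w.1 ((a.nbhd n v).1.2 w))) ^ 2)
      + (dist (a.rV n v) (J v (a.vert n v))) ^ 2
      + (dist (a.rU n v) (J' v (a.nbhd n v).1)) ^ 2
      + (dist (a.rV n v) 0) ^ 2
      + (dist (a.rU n v) 0) ^ 2))

/-- If the restriction of `a` to `𝒯` is a global section (a feasible trajectory
`{(cⁿ, sⁿ)}`) and the objective values are `a_{r_{v,n}} = J_v(sⁿ_v)` and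
`a_{r_{u_v,n}} = J'_v(cⁿ_v, sⁿ|_{U_v})`, then
`c_𝒮(a) = sqrt(Σ_n Σ_v (|J_v(sⁿ_v)|² + |J'_v(cⁿ_v, sⁿ|_{U_v})|²))`. -/
theorem consistencyRadius_eq_finiteHorizonObjective
    [Fintype V] (T : ℕ) (hT : 1 ≤ T) (E : V → V → Prop) (hE : ∀ v, E v v)
    (S : V → Type u) [∀ v, PseudoMetricSpace (S v)] (C : V → Type u)
    (F : ∀ v, Set (Rv E S C v)) (f : ∀ v, Rv E S C v → S v)
    (J : ∀ v, S v → ℝ) (J' : ∀ v, Rv E S C v → ℝ)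
    (a : SAssignment T E S C F)
    (hvert : ∀ (n : Fin (T + 1)) (v w : V) (h : E w v),
      a.vert n w = (a.nbhd n v).1.2 ⟨w, h⟩)
    (hlink : ∀ (n : Fin (T + 1)) (v : V), a.link n v = (a.nbhd n v).1.2 ⟨v, hE v⟩)
    (hdyn : ∀ (n : Fin (T + 1)) (h : (n : ℕ) + 1 ≤ T) (v : V),
      a.link ⟨(n : ℕ) + 1, by omega⟩ v = f v (a.nbhd n v).1)
    (hrV : ∀ n v, a.rV n v = J v (a.vert n v))
    (hrU : ∀ n v, a.rU n v = J' v (a.nbhd n v).1) :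
    cS T E hE S C F f J J' a
      = Real.sqrt (∑ n : Fin (T + 1), ∑ v : V,
          (|J v (a.vert n v)| ^ 2 + |J' v (a.nbhd n v).1| ^ 2)) := by
  unfold cS
  congr 1
  refine Finset.sum_congr rfl fun n _ => Finset.sum_congr rfl fun v _ => ?_
  have h1 : ∀ w : {w // E w v}, dist (a.vert n w.1) ((a.nbhd n v).1.2 w) = 0 := by
    intro w; rw [hvert n v w.1 w.2]; simp [dist_self]
  have h2 : ∀ w : {w // E w v},
      dist (a.rV n w.1) (J w.1 ((a.nbhd n v).1.2 w)) = 0 := by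
    intro w; rw [hrV, hvert n v w.1 w.2]; simp [dist_self]
  have hs1 : ∑ w : {w // E w v}, (dist (a.vert n w.1) ((a.nbhd n v).1.2 w)) ^ 2 = 0 :=
    Finset.sum_eq_zero fun w _ => by rw [h1 w]; ring
  have hs2 : ∑ w : {w // E w v}, (dist (a.rV n w.1) (J w.1 ((a.nbhd n v).1.2 w))) ^ 2 = 0 :=
    Finset.sum_eq_zero fun w _ => by rw [h2 w]; ring
  rw [hs1, hs2, hlink, hrV, hrU]
  simp only [dist_self, Real.dist_eq, sub_zero]
  rcases Nat.lt_or_ge (n : ℕ) T with h | h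
  · rw [dif_pos (by omega), hdyn n (by omega) v]
    simp
  · rw [dif_neg (by omega)]
    ring
end

section
/- For the Boolean state control problem with affine dynamics, no error is incurred by the thresholding process: for every nominal configuration x ∈ ℝ^V (i.e., x_w ∈ {s_{Φ,w}, s_{Ω,w}} for all w ∈ V) and every control vector u ∈ {c₀, c₁}^V, and for every v ∈ V, H( Σ_{w∈V} A_{wv} · ρ_w(τ_w(x_w)) + B_v · χ_v⁻¹(χ_v(u_v)) + h_v − η_v ) = τ_v( (Σ_{w∈V} A_{wv} x_w) + B_v u_v + h_v ); that is, the Boolean dynamics f̃_v := τ_v ∘ f_v ∘ γ_v composed with thresholding agrees exactly with thresholding the true affine dynamics f(x,u) = Ax + Bu + h on all feasible states. -/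
/-- The Heaviside function: `H(t) = 1` if `t ≥ 0` and `H(t) = 0` if `t < 0`. -/
noncomputable def Heav (t : ℝ) : ℝ := if 0 ≤ t then 1 else 0

/-! Thresholding followed by lifting is the identity on nominal states and on all controls, so the
two sides of the claim are `H` of the same number. -/

theorem Heav_of_nonneg {t : ℝ} (ht : 0 ≤ t) : Heav t = 1 := if_pos ht

theorem Heav_of_neg {t : ℝ} (ht : t < 0) : Heav t = 0 := if_neg ht.not_ge

theorem stateLift_threshold_of_nominal {sF η sO s : ℝ} (hF : sF < η) (hO : η ≤ sO)
    (hs : s = sF ∨ s = sO) : (sO - sF) * Heav (s - η) + sF = s := by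
  rcases hs with rfl | rfl
  · rw [Heav_of_neg (sub_neg.mpr hF)]; ring
  · rw [Heav_of_nonneg (sub_nonneg.mpr hO)]; ring

theorem controlLift_threshold {c0 c1 : ℝ} (hc : c0 ≠ c1) (c : ℝ) :
    (c1 - c0) * ((c - c0) / (c1 - c0)) + c0 = c := by
  rw [mul_div_cancel₀ _ (sub_ne_zero.mpr hc.symm), sub_add_cancel]

theorem boolean_affine_no_thresholding_error_general
    {V : Type*} [Fintype V]
    (A : V → V → ℝ) (B h η sF sO : V → ℝ)
    (hnom : ∀ v, sF v < η v ∧ η v ≤ sO v)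
    (c0 c1 : ℝ) (hc : c0 ≠ c1)
    (x : V → ℝ) (hx : ∀ w, x w = sF w ∨ x w = sO w)
    (u : V → ℝ)
    (v : V) :
    Heav ((∑ w : V, A w v * ((sO w - sF w) * Heav (x w - η w) + sF w))
        + B v * ((c1 - c0) * ((u v - c0) / (c1 - c0)) + c0) + h v - η v)
      = Heav ((∑ w : V, A w v * x w) + B v * u v + h v - η v) := by
  have hstate : ∀ w, (sO w - sF w) * Heav (x w - η w) + sF w = x w := fun w =>
    stateLift_threshold_of_nominal (hnom w).1 (hnom w).2 (hx w)
  simp only [hstate, controlLift_threshold hc]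

/-- Boolean state control with affine dynamics incurs no thresholding error.
At each node `v`: the failure threshold is `η v`, with operational set `[η v, ∞)`
and failed set `(-∞, η v)`; nominal states satisfy `sF v < η v ≤ sO v`; state
thresholding is `τ_v(s) = H(s − η_v)` and state lifting is
`ρ_v(b) = (sO_v − sF_v)·b + sF_v`; controls `c0 ≠ c1` have thresholding
`χ_v(c) = (c − c0)/(c1 − c0)` and lifting `χ_v⁻¹(b) = (c1 − c0)·b + c0`.  The
affine dynamics are `[f(x,u)]_v = Σ_w A w v · x w + B v · u v + h v`.  For every
nominal configuration `x` and control vector `u` with entries in `{c0, c1}`,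
the Boolean dynamics `f̃_v = τ_v ∘ f_v ∘ γ_v` applied to the thresholded state
agrees exactly with thresholding the true dynamics:
`H(Σ_w A w v · ρ_w(τ_w(x_w)) + B v · χ_v⁻¹(χ_v(u_v)) + h v − η v)
  = τ_v(Σ_w A w v · x w + B v · u v + h v)`. -/
theorem boolean_affine_no_thresholding_error
    {V : Type*} [Fintype V]
    (A : V → V → ℝ) (B h η sF sO : V → ℝ)
    (hnom : ∀ v, sF v < η v ∧ η v ≤ sO v)
    (c0 c1 : ℝ) (hc : c0 ≠ c1)
    (x : V → ℝ) (hx : ∀ w, x w = sF w ∨ x w = sO w)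
    (u : V → ℝ) (hu : ∀ v, u v = c0 ∨ u v = c1)
    (v : V) :
    Heav ((∑ w : V, A w v * ((sO w - sF w) * Heav (x w - η w) + sF w))
        + B v * ((c1 - c0) * ((u v - c0) / (c1 - c0)) + c0) + h v - η v)
      = Heav ((∑ w : V, A w v * x w) + B v * u v + h v - η v) :=
  boolean_affine_no_thresholding_error_general A B h η sF sO hnom c0 c1 hc x hx u v
end
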